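/- arXiv:2311.03950 — 13 statements merged into one kernel-verified Lean document; each statement's English description precedes it below -/
import Mathlib

section
/- For a proportional generalized claims problem and any allocation rule, the singleton partition (where each agent forms a coalition alone) is stable: no coalition can make all its members strictly better off than their proportional payoffs. -/
/-! Efficiency makes the payoffs in a coalition `T` add up to `α * ∑_{i∈T} c i`, the sum of
the singleton payoffs, so some member of `T` gets no more than alone. -/

section ProportionalEndowment

variable {N : Type*} {c : N → ℝ} {α : ℝ}

lemma proportional_endowment_nonneg (hc : ∀ i, 0 ≤ c i) (hα : 0 ≤ α) (S : Finset N) :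
    0 ≤ α * ∑ i ∈ S, c i :=
  mul_nonneg hα (Finset.sum_nonneg fun i _ => hc i)

lemma proportional_endowment_le_sum (hc : ∀ i, 0 ≤ c i) (hα : α ≤ 1) (S : Finset N) :
    α * ∑ i ∈ S, c i ≤ ∑ i ∈ S, c i :=
  mul_le_of_le_one_left (Finset.sum_nonneg fun i _ => hc i) hα

end ProportionalEndowment

theorem singleton_partition_stable_general
    {N : Type*} [DecidableEq N]
    (c : N → ℝ) (hc : ∀ i, 0 < c i) (α : ℝ) (hα0 : 0 < α) (hα1 : α < 1)
    (F : Finset N → ℝ → N → ℝ)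
    (halloc : ∀ (S : Finset N) (e : ℝ), 0 ≤ e → e ≤ ∑ i ∈ S, c i →
      (∀ i ∈ S, 0 ≤ F S e i ∧ F S e i ≤ c i) ∧ (∑ i ∈ S, F S e i) = e) :
    ¬ ∃ T : Finset N, T.Nonempty ∧
        ∀ i ∈ T, F T (α * ∑ k ∈ T, c k) i > F {i} (α * c i) i := by
  rintro ⟨T, hT, hbetter⟩
  have hc' : ∀ i, 0 ≤ c i := fun i => (hc i).le
  have efficient (S : Finset N) : ∑ i ∈ S, F S (α * ∑ k ∈ S, c k) i = α * ∑ k ∈ S, c k :=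
    (halloc S _ (proportional_endowment_nonneg hc' hα0.le S)
      (proportional_endowment_le_sum hc' hα1.le S)).2
  have singleton_payoff (i : N) : F {i} (α * c i) i = α * c i := by
    simpa using efficient {i}
  obtain ⟨i, hi, hle⟩ := Finset.exists_le_of_sum_le hT
    (f := F T (α * ∑ k ∈ T, c k)) (g := fun i => α * c i)
    (by rw [efficient T, Finset.mul_sum])
  exact (hbetter i hi).not_ge (by rwa [singleton_payoff])

/-- In a proportional generalized claims problem (coalition `S` has endowment
`α * ∑_{i∈S} c i`), for any allocation rule `F`, the singleton partition is
stable: no nonempty coalition `T` makes all its members strictly better off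
than their singleton (proportional) payoffs. -/
theorem singleton_partition_stable
    {N : Type*} [Fintype N] [DecidableEq N]
    (c : N → ℝ) (hc : ∀ i, 0 < c i) (α : ℝ) (hα0 : 0 < α) (hα1 : α < 1)
    (F : Finset N → ℝ → N → ℝ)
    (halloc : ∀ (S : Finset N) (e : ℝ), 0 ≤ e → e ≤ ∑ i ∈ S, c i →
      (∀ i ∈ S, 0 ≤ F S e i ∧ F S e i ≤ c i) ∧ (∑ i ∈ S, F S e i) = e) :
    ¬ ∃ T : Finset N, T.Nonempty ∧
        ∀ i ∈ T, F T (α * ∑ k ∈ T, c k) i > F {i} (α * c i) i :=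
  singleton_partition_stable_general c hc α hα0 hα1 F halloc
end

section
/- In a proportional generalized claims problem, every stable partition induces the proportional allocation: for each agent i in the coalition π(i) of a stable partition π, the rule gives payoff F_i(c|_{π(i)}, E_{π(i)}) = α · c_i. -/
/-!
Stability against singleton deviations gives every agent at least her stand-alone payoff
`α * c i`. Within a coalition `S` of the partition the rule distributes exactly
`α * ∑_{k ∈ S} c k`, which is the sum of these lower bounds, so none of them can be strict.
-/

open Finset

section ClaimsRule

variable {N : Type*}

def IsClaimsRule (c : N → ℝ) (F : Finset N → ℝ → N → ℝ) : Prop :=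
  ∀ (S : Finset N) (e : ℝ), 0 ≤ e → e ≤ ∑ i ∈ S, c i →
    (∀ i ∈ S, 0 ≤ F S e i ∧ F S e i ≤ c i) ∧ (∑ i ∈ S, F S e i) = e

namespace IsClaimsRule

variable {c : N → ℝ} {F : Finset N → ℝ → N → ℝ}

theorem sum_proportional (hF : IsClaimsRule c F) {α : ℝ} (hα0 : 0 ≤ α) (hα1 : α ≤ 1)
    {S : Finset N} (hc : ∀ i ∈ S, 0 ≤ c i) :
    ∑ i ∈ S, F S (α * ∑ k ∈ S, c k) i = α * ∑ k ∈ S, c k :=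
  (hF S _ (mul_nonneg hα0 (sum_nonneg hc)) (mul_le_of_le_one_left (sum_nonneg hc) hα1)).2

theorem apply_singleton_proportional (hF : IsClaimsRule c F) {α : ℝ} (hα0 : 0 ≤ α)
    (hα1 : α ≤ 1) {i : N} (hc : 0 ≤ c i) :
    F {i} (α * ∑ k ∈ {i}, c k) i = α * c i := by
  simpa using hF.sum_proportional hα0 hα1 (S := {i}) (by simpa using hc)

end IsClaimsRule

end ClaimsRule

theorem apply_singleton_le_of_not_exists_blocking {N : Type*} {F : Finset N → ℝ → N → ℝ}
    {E : Finset N → ℝ} {u : N → ℝ}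
    (h : ¬ ∃ T : Finset N, T.Nonempty ∧ ∀ i ∈ T, F T (E T) i > u i) (j : N) :
    F {j} (E {j}) j ≤ u j := by
  by_contra! hj
  exact h ⟨{j}, singleton_nonempty j, by simpa using hj⟩

theorem stable_partition_proportional_payoffs_general
    {N : Type*}
    (c : N → ℝ) (hc : ∀ i, 0 < c i) (α : ℝ) (hα0 : 0 < α) (hα1 : α < 1)
    (F : Finset N → ℝ → N → ℝ)
    (halloc : ∀ (S : Finset N) (e : ℝ), 0 ≤ e → e ≤ ∑ i ∈ S, c i →
      (∀ i ∈ S, 0 ≤ F S e i ∧ F S e i ≤ c i) ∧ (∑ i ∈ S, F S e i) = e)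
    (π : N → Finset N) (hπmem : ∀ i, i ∈ π i)
    (hπpart : ∀ i j, j ∈ π i → π j = π i)
    (hstable : ¬ ∃ T : Finset N, T.Nonempty ∧
        ∀ i ∈ T, F T (α * ∑ k ∈ T, c k) i > F (π i) (α * ∑ k ∈ π i, c k) i) :
    ∀ i, F (π i) (α * ∑ k ∈ π i, c k) i = α * c i := by
  have hF : IsClaimsRule c F := halloc
  have hc0 : ∀ i, 0 ≤ c i := fun i => (hc i).le
  have hge : ∀ j, α * c j ≤ F (π j) (α * ∑ k ∈ π j, c k) j := fun j => by
    rw [← hF.apply_singleton_proportional hα0.le hα1.le (hc0 j)]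
    exact apply_singleton_le_of_not_exists_blocking (E := fun T => α * ∑ k ∈ T, c k)
      (u := fun i => F (π i) (α * ∑ k ∈ π i, c k) i) hstable j
  intro i
  have hle : ∀ j ∈ π i, α * c j ≤ F (π i) (α * ∑ k ∈ π i, c k) j :=
    fun j hj => hπpart i j hj ▸ hge j
  have htotal : ∑ j ∈ π i, α * c j = ∑ j ∈ π i, F (π i) (α * ∑ k ∈ π i, c k) j := by
    rw [← mul_sum, hF.sum_proportional hα0.le hα1.le fun j _ => hc0 j]
  exact ((sum_eq_sum_iff_of_le hle).mp htotal i (hπmem i)).symm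

/-- In a proportional generalized claims problem, every stable partition induces
the proportional allocation: each agent `i` receives `α * c i` in her coalition. -/
theorem stable_partition_proportional_payoffs
    {N : Type*} [Fintype N] [DecidableEq N]
    (c : N → ℝ) (hc : ∀ i, 0 < c i) (α : ℝ) (hα0 : 0 < α) (hα1 : α < 1)
    (F : Finset N → ℝ → N → ℝ)
    (halloc : ∀ (S : Finset N) (e : ℝ), 0 ≤ e → e ≤ ∑ i ∈ S, c i →
      (∀ i ∈ S, 0 ≤ F S e i ∧ F S e i ≤ c i) ∧ (∑ i ∈ S, F S e i) = e)
    (π : N → Finset N) (hπmem : ∀ i, i ∈ π i)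
    (hπpart : ∀ i j, j ∈ π i → π j = π i)
    (hstable : ¬ ∃ T : Finset N, T.Nonempty ∧
        ∀ i ∈ T, F T (α * ∑ k ∈ T, c k) i > F (π i) (α * ∑ k ∈ π i, c k) i) :
    ∀ i, F (π i) (α * ∑ k ∈ π i, c k) i = α * c i :=
  stable_partition_proportional_payoffs_general c hc α hα0 hα1 F halloc π hπmem hπpart hstable
end

section
/- Let F be a resource monotonic and consistent rule. In a θ-minimal proportional generalized claims problem, if S ⊆ N with |S| > θ is such that some agent i ∈ S does not receive the proportional payoff (F_i(c|_S, E_S) ≠ α c_i), then there is an agent i' ∈ S such that every agent j ∈ S \ {i'} weakly prefers S \ {i'} to S, i.e., F_j(c|_{S∖{i'}}, E_{S∖{i'}}) ≥ F_j(c|_S, E_S). -/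
/-!
Let `x = F(c|_S, E_S)`. Since `∑ x = α ∑ c` on `S` and `x ≠ α c`, some agent `i'` receives strictly
more than `α c_{i'}`. The others then share `E_S - x_{i'} < α ∑_{S ∖ {i'}} c = E_{S ∖ {i'}}`;
by consistency `x|_{S ∖ {i'}}` is the allocation of that smaller amount, so resource monotonicity
makes everybody in `S ∖ {i'}` weakly better off with the full endowment `E_{S ∖ {i'}}`.
-/

open Finset

theorem Finset.exists_lt_of_sum_eq_of_exists_ne {ι M : Type*} [AddCommMonoid M] [LinearOrder M]
    [IsOrderedCancelAddMonoid M] {s : Finset ι} {f g : ι → M}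
    (hsum : ∑ i ∈ s, f i = ∑ i ∈ s, g i) (hne : ∃ i ∈ s, f i ≠ g i) :
    ∃ i ∈ s, g i < f i := by
  by_contra! hle
  obtain ⟨i, hi, hfg⟩ := hne
  exact hfg ((sum_eq_sum_iff_of_le hle).1 hsum i hi)

lemma proportional_endowment_mem_Icc {ι : Type*} {s : Finset ι} {c : ι → ℝ}
    (hc : ∀ i ∈ s, 0 ≤ c i) {α : ℝ} (hα0 : 0 ≤ α) (hα1 : α ≤ 1) :
    α * ∑ i ∈ s, c i ∈ Set.Icc 0 (∑ i ∈ s, c i) := by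
  have hsum : 0 ≤ ∑ i ∈ s, c i := sum_nonneg hc
  exact ⟨mul_nonneg hα0 hsum, mul_le_of_le_one_left hsum hα1⟩

section Rule

variable {N : Type*} {c : N → ℝ} {F : Finset N → ℝ → N → ℝ}

lemma le_of_resource_monotone
    (hrm : ∀ (S : Finset N) (e e' : ℝ), 0 ≤ e → e < e' → e' ≤ ∑ i ∈ S, c i →
      ∀ i ∈ S, F S e i ≤ F S e' i)
    {S : Finset N} {e e' : ℝ} (he : 0 ≤ e) (hee' : e ≤ e') (he' : e' ≤ ∑ i ∈ S, c i)
    {i : N} (hi : i ∈ S) : F S e i ≤ F S e' i := by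
  rcases hee'.lt_or_eq with hlt | rfl
  · exact hrm S e e' he hlt he' i hi
  · exact le_rfl

lemma le_of_consistent_of_resource_monotone
    (hnonneg : ∀ (S : Finset N) (e : ℝ), 0 ≤ e → e ≤ ∑ i ∈ S, c i → ∀ i ∈ S, 0 ≤ F S e i)
    (hrm : ∀ (S : Finset N) (e e' : ℝ), 0 ≤ e → e < e' → e' ≤ ∑ i ∈ S, c i →
      ∀ i ∈ S, F S e i ≤ F S e' i)
    (hcons : ∀ (S : Finset N) (e : ℝ), 0 ≤ e → e ≤ ∑ i ∈ S, c i →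
      ∀ S' : Finset N, S' ⊂ S →
        ∀ j ∈ S', F S' (∑ k ∈ S', F S e k) j = F S e j)
    {S S' : Finset N} (hS' : S' ⊂ S) {e e' : ℝ} (he : 0 ≤ e) (heS : e ≤ ∑ i ∈ S, c i)
    (hcover : ∑ k ∈ S', F S e k ≤ e') (he' : e' ≤ ∑ i ∈ S', c i)
    {j : N} (hj : j ∈ S') : F S e j ≤ F S' e' j := by
  have hshare : 0 ≤ ∑ k ∈ S', F S e k :=
    sum_nonneg fun k hk => hnonneg S e he heS k (hS'.subset hk)
  rw [← hcons S e he heS S' hS' j hj]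
  exact le_of_resource_monotone hrm hshare hcover he' hj

end Rule

theorem remove_agent_weakly_improves_general
    {N : Type*} [DecidableEq N] (θ : ℕ)
    (c : N → ℝ) (hc : ∀ i, 0 < c i) (α : ℝ) (hα0 : 0 < α) (hα1 : α < 1)
    (F : Finset N → ℝ → N → ℝ)
    (halloc : ∀ (S : Finset N) (e : ℝ), 0 ≤ e → e ≤ ∑ i ∈ S, c i →
      (∀ i ∈ S, 0 ≤ F S e i ∧ F S e i ≤ c i) ∧ (∑ i ∈ S, F S e i) = e)
    (hrm : ∀ (S : Finset N) (e e' : ℝ), 0 ≤ e → e < e' → e' ≤ ∑ i ∈ S, c i →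
      ∀ i ∈ S, F S e i ≤ F S e' i)
    (hcons : ∀ (S : Finset N) (e : ℝ), 0 ≤ e → e ≤ ∑ i ∈ S, c i →
      ∀ S' : Finset N, S' ⊂ S →
        ∀ j ∈ S', F S' (∑ k ∈ S', F S e k) j = F S e j)
    (S : Finset N) (hScard : θ < S.card)
    (hnotprop : ∃ i ∈ S,
      F S (if θ ≤ S.card then α * ∑ k ∈ S, c k else 0) i ≠ α * c i) :
    ∃ i' ∈ S, ∀ j ∈ S.erase i',
      F (S.erase i')
          (if θ ≤ (S.erase i').card then α * ∑ k ∈ S.erase i', c k else 0) j ≥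
        F S (if θ ≤ S.card then α * ∑ k ∈ S, c k else 0) j := by
  rw [if_pos hScard.le] at hnotprop ⊢
  have hcS (T : Finset N) : ∀ i ∈ T, 0 ≤ c i := fun i _ => (hc i).le
  obtain ⟨hE0, hES⟩ := proportional_endowment_mem_Icc (hcS S) hα0.le hα1.le
  have hsum : ∑ k ∈ S, F S (α * ∑ k ∈ S, c k) k = ∑ k ∈ S, α * c k := by
    rw [(halloc S _ hE0 hES).2, mul_sum]
  obtain ⟨i', hi'S, hi'⟩ := exists_lt_of_sum_eq_of_exists_ne hsum hnotprop
  refine ⟨i', hi'S, fun j hj => ?_⟩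
  have hcard : θ ≤ (S.erase i').card := by
    rw [card_erase_of_mem hi'S]
    omega
  rw [if_pos hcard]
  have hcover : ∑ k ∈ S.erase i', F S (α * ∑ k ∈ S, c k) k ≤ α * ∑ k ∈ S.erase i', c k := by
    have hsplit_alloc := sum_erase_add S (F S (α * ∑ k ∈ S, c k)) hi'S
    have hsplit_endowment : α * ∑ k ∈ S, c k = α * ∑ k ∈ S.erase i', c k + α * c i' := by
      rw [← sum_erase_add S c hi'S, mul_add]
    rw [hsum, ← mul_sum] at hsplit_alloc
    linarith
  exact le_of_consistent_of_resource_monotone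
    (fun T e he heT i hi => ((halloc T e he heT).1 i hi).1) hrm hcons (erase_ssubset hi'S) hE0 hES
    hcover (proportional_endowment_mem_Icc (hcS _) hα0.le hα1.le).2 hj

/-- For a resource monotonic and consistent rule in a θ-minimal proportional
generalized claims problem: if in a coalition `S` with `|S| > θ` some agent does
not receive the proportional payoff, then some agent `i'` can be removed so that
every remaining agent is weakly better off in `S \ {i'}`. -/
theorem remove_agent_weakly_improves
    {N : Type*} [Fintype N] [DecidableEq N] (θ : ℕ)
    (c : N → ℝ) (hc : ∀ i, 0 < c i) (α : ℝ) (hα0 : 0 < α) (hα1 : α < 1)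
    (F : Finset N → ℝ → N → ℝ)
    (halloc : ∀ (S : Finset N) (e : ℝ), 0 ≤ e → e ≤ ∑ i ∈ S, c i →
      (∀ i ∈ S, 0 ≤ F S e i ∧ F S e i ≤ c i) ∧ (∑ i ∈ S, F S e i) = e)
    (hrm : ∀ (S : Finset N) (e e' : ℝ), 0 ≤ e → e < e' → e' ≤ ∑ i ∈ S, c i →
      ∀ i ∈ S, F S e i ≤ F S e' i)
    (hcons : ∀ (S : Finset N) (e : ℝ), 0 ≤ e → e ≤ ∑ i ∈ S, c i →
      ∀ S' : Finset N, S' ⊂ S →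
        ∀ j ∈ S', F S' (∑ k ∈ S', F S e k) j = F S e j)
    (S : Finset N) (hScard : θ < S.card)
    (hnotprop : ∃ i ∈ S,
      F S (if θ ≤ S.card then α * ∑ k ∈ S, c k else 0) i ≠ α * c i) :
    ∃ i' ∈ S, ∀ j ∈ S.erase i',
      F (S.erase i')
          (if θ ≤ (S.erase i').card then α * ∑ k ∈ S.erase i', c k else 0) j ≥
        F S (if θ ≤ S.card then α * ∑ k ∈ S, c k else 0) j :=
  remove_agent_weakly_improves_general θ c hc α hα0 hα1 F halloc hrm hcons S hScard hnotprop
end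

section
/- Let F be a resource monotonic and consistent rule. In a θ-minimal proportional generalized claims problem, for every coalition S ⊆ N with |S| > θ there exists a subcoalition S' ⊊ S with |S'| = θ such that every agent j ∈ S' weakly prefers S' to S: F_j(c|_{S'}, E_{S'}) ≥ F_j(c|_S, E_S). -/
/-!
Let `x = F(c|_S, E_S)`. Since `∑_{i∈S} x_i = α ∑_{i∈S} c_i`, the `θ` members of `S` with the
smallest ratios `x_i / c_i` receive together at most `α` times their total claim, which is
exactly `E_{S'}`. By consistency they receive the same as in `S` when `S'` is given
`∑_{i∈S'} x_i`, and by resource monotonicity raising this endowment to `E_{S'}` does not hurt them.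
-/

open Finset

namespace Finset

variable {ι : Type*} [DecidableEq ι]

theorem exists_subset_card_eq_forall_le_of_mem_sdiff {β : Type*} [LinearOrder β] (r : ι → β)
    (s : Finset ι) {n : ℕ} (hn : n ≤ #s) :
    ∃ t ⊆ s, #t = n ∧ ∀ j ∈ t, ∀ i ∈ s \ t, r j ≤ r i := by
  induction n with
  | zero => exact ⟨∅, empty_subset s, card_empty, by simp⟩
  | succ n ih =>
    obtain ⟨t, hts, htn, hlow⟩ := ih (Nat.le_of_succ_le hn)
    have hne : (s \ t).Nonempty := by
      rw [← card_pos, card_sdiff_of_subset hts]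
      omega
    obtain ⟨a, ha, hamin⟩ := exists_min_image (s \ t) r hne
    obtain ⟨has, hat⟩ := mem_sdiff.mp ha
    refine ⟨insert a t, insert_subset has hts, by rw [card_insert_of_notMem hat, htn], ?_⟩
    intro j hj i hi
    have hi' : i ∈ s \ t := sdiff_subset_sdiff le_rfl (subset_insert a t) hi
    rcases mem_insert.mp hj with rfl | hjt
    · exact hamin i hi'
    · exact hlow j hjt i hi'

theorem sum_le_mul_sum_of_forall_div_le {s t : Finset ι} {x c : ι → ℝ} {α : ℝ}
    (hc : ∀ i ∈ s, 0 < c i) (hts : t ⊆ s)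
    (hlow : ∀ j ∈ t, ∀ i ∈ s \ t, x j / c j ≤ x i / c i)
    (hs : ∑ i ∈ s, x i ≤ α * ∑ i ∈ s, c i) :
    ∑ i ∈ t, x i ≤ α * ∑ i ∈ t, c i := by
  rw [mul_sum] at hs ⊢
  by_cases hbelow : ∀ j ∈ t, x j ≤ α * c j
  · exact sum_le_sum hbelow
  push Not at hbelow
  obtain ⟨j, hj, hjα⟩ := hbelow
  have hαj : α < x j / c j := (lt_div_iff₀ (hc j (hts hj))).mpr (by linarith)
  have habove : ∀ i ∈ s \ t, α * c i ≤ x i := fun i hi =>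
    (le_div_iff₀ (hc i (mem_sdiff.mp hi).1)).mp (hαj.le.trans (hlow j hj i hi))
  have hx := sum_sdiff hts (f := x)
  have hc' := sum_sdiff hts (f := fun i => α * c i)
  linarith [sum_le_sum habove]

end Finset

theorem le_of_consistent_of_resourceMonotone {N : Type*} (c : N → ℝ)
    (F : Finset N → ℝ → N → ℝ)
    (hnonneg : ∀ (S : Finset N) (e : ℝ), 0 ≤ e → e ≤ ∑ i ∈ S, c i → ∀ i ∈ S, 0 ≤ F S e i)
    (hrm : ∀ (S : Finset N) (e e' : ℝ), 0 ≤ e → e < e' → e' ≤ ∑ i ∈ S, c i →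
      ∀ i ∈ S, F S e i ≤ F S e' i)
    (hcons : ∀ (S : Finset N) (e : ℝ), 0 ≤ e → e ≤ ∑ i ∈ S, c i →
      ∀ S' : Finset N, S' ⊂ S →
        ∀ j ∈ S', F S' (∑ k ∈ S', F S e k) j = F S e j)
    {S T : Finset N} {e e' : ℝ} (he : 0 ≤ e) (heS : e ≤ ∑ i ∈ S, c i) (hTS : T ⊂ S)
    (hle : ∑ k ∈ T, F S e k ≤ e') (he'T : e' ≤ ∑ i ∈ T, c i) :
    ∀ j ∈ T, F S e j ≤ F T e' j := by
  intro j hj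
  rw [← hcons S e he heS T hTS j hj]
  rcases hle.lt_or_eq with hlt | rfl
  · exact hrm T _ e' (sum_nonneg fun k hk => hnonneg S e he heS k (hTS.subset hk)) hlt he'T j hj
  · rfl

theorem exists_theta_subcoalition_weakly_preferred_general
    {N : Type*} [DecidableEq N] (θ : ℕ)
    (c : N → ℝ) (hc : ∀ i, 0 < c i) (α : ℝ) (hα0 : 0 < α) (hα1 : α < 1)
    (F : Finset N → ℝ → N → ℝ)
    (halloc : ∀ (S : Finset N) (e : ℝ), 0 ≤ e → e ≤ ∑ i ∈ S, c i →
      (∀ i ∈ S, 0 ≤ F S e i ∧ F S e i ≤ c i) ∧ (∑ i ∈ S, F S e i) = e)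
    (hrm : ∀ (S : Finset N) (e e' : ℝ), 0 ≤ e → e < e' → e' ≤ ∑ i ∈ S, c i →
      ∀ i ∈ S, F S e i ≤ F S e' i)
    (hcons : ∀ (S : Finset N) (e : ℝ), 0 ≤ e → e ≤ ∑ i ∈ S, c i →
      ∀ S' : Finset N, S' ⊂ S →
        ∀ j ∈ S', F S' (∑ k ∈ S', F S e k) j = F S e j)
    (S : Finset N) (hScard : θ < S.card) :
    ∃ S' : Finset N, S' ⊂ S ∧ S'.card = θ ∧
      ∀ j ∈ S', F S' (if θ ≤ S'.card then α * ∑ k ∈ S', c k else 0) j ≥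
        F S (if θ ≤ S.card then α * ∑ k ∈ S, c k else 0) j := by
  have hcS : 0 < ∑ i ∈ S, c i := sum_pos (fun i _ => hc i) (card_pos.mp (by omega))
  have hE0 : 0 ≤ α * ∑ i ∈ S, c i := by positivity
  have hES : α * ∑ i ∈ S, c i ≤ ∑ i ∈ S, c i := by nlinarith
  obtain ⟨T, hTS, hTcard, hlow⟩ := exists_subset_card_eq_forall_le_of_mem_sdiff
    (fun i => F S (α * ∑ k ∈ S, c k) i / c i) S hScard.le
  have hTS' : T ⊂ S := ssubset_of_subset_of_ne hTS (by rintro rfl; omega)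
  have hshare : ∑ k ∈ T, F S (α * ∑ k ∈ S, c k) k ≤ α * ∑ k ∈ T, c k :=
    sum_le_mul_sum_of_forall_div_le (fun i _ => hc i) hTS hlow
      (halloc S _ hE0 hES).2.le
  have hET : α * ∑ k ∈ T, c k ≤ ∑ k ∈ T, c k := by
    have : 0 ≤ ∑ k ∈ T, c k := sum_nonneg fun k _ => (hc k).le
    nlinarith
  refine ⟨T, hTS', hTcard, fun j hj => ?_⟩
  rw [if_pos hTcard.ge, if_pos hScard.le]
  exact le_of_consistent_of_resourceMonotone c F
    (fun S e he heS i hi => ((halloc S e he heS).1 i hi).1) hrm hcons hE0 hES hTS' hshare hET j hj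

/-- For a resource monotonic and consistent rule in a θ-minimal proportional
generalized claims problem: every coalition `S` with `|S| > θ` has a subcoalition
`S' ⊊ S` of size exactly `θ` in which every member is weakly better off. -/
theorem exists_theta_subcoalition_weakly_preferred
    {N : Type*} [Fintype N] [DecidableEq N] (θ : ℕ)
    (c : N → ℝ) (hc : ∀ i, 0 < c i) (α : ℝ) (hα0 : 0 < α) (hα1 : α < 1)
    (F : Finset N → ℝ → N → ℝ)
    (halloc : ∀ (S : Finset N) (e : ℝ), 0 ≤ e → e ≤ ∑ i ∈ S, c i →
      (∀ i ∈ S, 0 ≤ F S e i ∧ F S e i ≤ c i) ∧ (∑ i ∈ S, F S e i) = e)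
    (hrm : ∀ (S : Finset N) (e e' : ℝ), 0 ≤ e → e < e' → e' ≤ ∑ i ∈ S, c i →
      ∀ i ∈ S, F S e i ≤ F S e' i)
    (hcons : ∀ (S : Finset N) (e : ℝ), 0 ≤ e → e ≤ ∑ i ∈ S, c i →
      ∀ S' : Finset N, S' ⊂ S →
        ∀ j ∈ S', F S' (∑ k ∈ S', F S e k) j = F S e j)
    (S : Finset N) (hScard : θ < S.card) :
    ∃ S' : Finset N, S' ⊂ S ∧ S'.card = θ ∧
      ∀ j ∈ S', F S' (if θ ≤ S'.card then α * ∑ k ∈ S', c k else 0) j ≥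
        F S (if θ ≤ S.card then α * ∑ k ∈ S, c k else 0) j :=
  exists_theta_subcoalition_weakly_preferred_general θ c hc α hα0 hα1 F halloc hrm hcons S hScard
end

section
/- Let F be a strictly resource monotonic and consistent rule. In a θ-minimal proportional generalized claims problem, in every stable partition π, every coalition S ∈ π with |S| > θ gives each of its members the proportional payoff: F_i(c|_S, E_S) = α c_i for all i ∈ S. -/
/-!
Suppose a coalition `S` with `|S| > θ` does not split `α ∑_S c` proportionally. Since the
shares add up to `α ∑_S c`, some member `j` gets strictly more than `α c_j`, so the others,
`T = S \ {j}`, get strictly less than `α ∑_T c` in total. As `|T| ≥ θ`, that amount is exactly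
what `T` would be endowed with on its own. By consistency `F` gives the members of `T` the same
payoffs in `T` with the smaller total as they get in `S`, and by strict resource monotonicity
each of them is strictly better off with `T`'s own endowment, so `T` blocks the partition.
-/

open Finset

theorem Finset.exists_lt_of_sum_eq_of_ne {ι M : Type*} [AddCommMonoid M] [LinearOrder M]
    [IsOrderedCancelAddMonoid M] {s : Finset ι} {f g : ι → M}
    (hsum : ∑ i ∈ s, f i = ∑ i ∈ s, g i) {j : ι} (hj : j ∈ s) (hne : f j ≠ g j) :
    ∃ i ∈ s, g i < f i := by
  by_contra! hle
  exact hne ((sum_eq_sum_iff_of_le hle).1 hsum j hj)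

theorem Finset.sum_erase_lt_mul_sum_erase {ι R : Type*} [DecidableEq ι] [CommRing R]
    [LinearOrder R] [IsStrictOrderedRing R] {s : Finset ι} {x c : ι → R} {α : R}
    (hsum : ∑ i ∈ s, x i = α * ∑ i ∈ s, c i) {j : ι} (hj : j ∈ s)
    (hlt : α * c j < x j) :
    ∑ i ∈ s.erase j, x i < α * ∑ i ∈ s.erase j, c i := by
  have hx := sum_erase_add s x hj
  have hc := sum_erase_add s c hj
  rw [← hc, mul_add] at hsum
  linarith

namespace ClaimsRule

variable {N : Type*} (c : N → ℝ) (F : Finset N → ℝ → N → ℝ)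

def IsAllocation : Prop :=
  ∀ (S : Finset N) (e : ℝ), 0 ≤ e → e ≤ ∑ i ∈ S, c i →
    (∀ i ∈ S, 0 ≤ F S e i ∧ F S e i ≤ c i) ∧ (∑ i ∈ S, F S e i) = e

def IsStrictlyResourceMonotonic : Prop :=
  ∀ (S : Finset N) (e e' : ℝ), 0 ≤ e → e < e' → e' ≤ ∑ i ∈ S, c i →
    ∀ i ∈ S, F S e i < F S e' i

def IsConsistent : Prop :=
  ∀ (S : Finset N) (e : ℝ), 0 ≤ e → e ≤ ∑ i ∈ S, c i →
    ∀ S' : Finset N, S' ⊂ S → ∀ j ∈ S', F S' (∑ k ∈ S', F S e k) j = F S e j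

variable {c F}

theorem apply_lt_apply_of_sum_lt (halloc : IsAllocation c F)
    (hsrm : IsStrictlyResourceMonotonic c F) (hcons : IsConsistent c F)
    {S T : Finset N} (hTS : T ⊂ S) {E e : ℝ} (hE0 : 0 ≤ E) (hES : E ≤ ∑ i ∈ S, c i)
    (hlt : ∑ k ∈ T, F S E k < e) (heT : e ≤ ∑ i ∈ T, c i) :
    ∀ m ∈ T, F S E m < F T e m := by
  intro m hm
  have hsum_nonneg : 0 ≤ ∑ k ∈ T, F S E k :=
    sum_nonneg fun k hk => ((halloc S E hE0 hES).1 k (hTS.subset hk)).1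
  calc F S E m = F T (∑ k ∈ T, F S E k) m := (hcons S E hE0 hES T hTS m hm).symm
    _ < F T e m := hsrm T _ e hsum_nonneg hlt heT m hm

end ClaimsRule

open ClaimsRule

theorem stable_partition_large_coalitions_proportional_general
    {N : Type*} [Fintype N] [DecidableEq N] (θ : ℕ)
    (c : N → ℝ) (hc : ∀ i, 0 < c i) (α : ℝ) (hα0 : 0 < α) (hα1 : α < 1)
    (F : Finset N → ℝ → N → ℝ)
    (halloc : ∀ (S : Finset N) (e : ℝ), 0 ≤ e → e ≤ ∑ i ∈ S, c i →
      (∀ i ∈ S, 0 ≤ F S e i ∧ F S e i ≤ c i) ∧ (∑ i ∈ S, F S e i) = e)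
    (hsrm : ∀ (S : Finset N) (e e' : ℝ), 0 ≤ e → e < e' → e' ≤ ∑ i ∈ S, c i →
      ∀ i ∈ S, F S e i < F S e' i)
    (hcons : ∀ (S : Finset N) (e : ℝ), 0 ≤ e → e ≤ ∑ i ∈ S, c i →
      ∀ S' : Finset N, S' ⊂ S →
        ∀ j ∈ S', F S' (∑ k ∈ S', F S e k) j = F S e j)
    (π : N → Finset N)
    (hπpart : ∀ i j, j ∈ π i → π j = π i)
    (hstable : ¬ ∃ T : Finset N, T.Nonempty ∧
        ∀ i ∈ T, F T (if θ ≤ T.card then α * ∑ k ∈ T, c k else 0) i >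
          F (π i) (if θ ≤ (π i).card then α * ∑ k ∈ π i, c k else 0) i) :
    ∀ i, θ < (π i).card →
      ∀ j ∈ π i, F (π i) (if θ ≤ (π i).card then α * ∑ k ∈ π i, c k else 0) j
        = α * c j := by
  intro i hcard j hj
  set S := π i
  have hendow (T : Finset N) : 0 ≤ α * ∑ k ∈ T, c k ∧ α * ∑ k ∈ T, c k ≤ ∑ k ∈ T, c k := by
    have := sum_nonneg fun k (_ : k ∈ T) => (hc k).le
    constructor <;> nlinarith
  rw [if_pos hcard.le]
  set E := α * ∑ k ∈ S, c k
  obtain ⟨-, hsum⟩ := halloc S E (hendow S).1 (hendow S).2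
  by_contra hne
  obtain ⟨j', hj', hover⟩ := exists_lt_of_sum_eq_of_ne (hsum.trans (mul_sum S c α)) hj hne
  set T := S.erase j'
  have hshort : ∑ k ∈ T, F S E k < α * ∑ k ∈ T, c k := sum_erase_lt_mul_sum_erase hsum hj' hover
  have hTθ : θ ≤ T.card := by rw [card_erase_of_mem hj']; omega
  refine hstable ⟨T, nonempty_iff_ne_empty.2 fun hT => by simp [hT] at hshort, fun m hm => ?_⟩
  rw [hπpart i m (mem_of_mem_erase hm), if_pos hTθ, if_pos hcard.le]
  exact apply_lt_apply_of_sum_lt halloc hsrm hcons (erase_ssubset hj') (hendow S).1 (hendow S).2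
    hshort (hendow T).2 m hm

/-- For a strictly resource monotonic and consistent rule in a θ-minimal
proportional generalized claims problem, in every stable partition every
coalition of size larger than `θ` gives each member the proportional payoff. -/
theorem stable_partition_large_coalitions_proportional
    {N : Type*} [Fintype N] [DecidableEq N] (θ : ℕ)
    (c : N → ℝ) (hc : ∀ i, 0 < c i) (α : ℝ) (hα0 : 0 < α) (hα1 : α < 1)
    (F : Finset N → ℝ → N → ℝ)
    (halloc : ∀ (S : Finset N) (e : ℝ), 0 ≤ e → e ≤ ∑ i ∈ S, c i →
      (∀ i ∈ S, 0 ≤ F S e i ∧ F S e i ≤ c i) ∧ (∑ i ∈ S, F S e i) = e)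
    (hsrm : ∀ (S : Finset N) (e e' : ℝ), 0 ≤ e → e < e' → e' ≤ ∑ i ∈ S, c i →
      ∀ i ∈ S, F S e i < F S e' i)
    (hcons : ∀ (S : Finset N) (e : ℝ), 0 ≤ e → e ≤ ∑ i ∈ S, c i →
      ∀ S' : Finset N, S' ⊂ S →
        ∀ j ∈ S', F S' (∑ k ∈ S', F S e k) j = F S e j)
    (π : N → Finset N) (hπmem : ∀ i, i ∈ π i)
    (hπpart : ∀ i j, j ∈ π i → π j = π i)
    (hstable : ¬ ∃ T : Finset N, T.Nonempty ∧
        ∀ i ∈ T, F T (if θ ≤ T.card then α * ∑ k ∈ T, c k else 0) i >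
          F (π i) (if θ ≤ (π i).card then α * ∑ k ∈ π i, c k else 0) i) :
    ∀ i, θ < (π i).card →
      ∀ j ∈ π i, F (π i) (if θ ≤ (π i).card then α * ∑ k ∈ π i, c k else 0) j
        = α * c j :=
  stable_partition_large_coalitions_proportional_general θ c hc α hα0 hα1 F halloc hsrm hcons π
    hπpart hstable
end

section
/- Under the constrained equal awards rule in a 2-minimal proportional generalized claims problem with claims c_1 ≤ c_2 ≤ … ≤ c_n, every agent i < n weakly prefers pairing with the highest-claim agent n over pairing with any other agent j: CEA_i(c_{\{i,n\}}, α(c_i + c_n)) ≥ CEA_i(c_{\{i,j\}}, α(c_i + c_j)). -/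
/-!
Against a partner with claim `b ≥ a`, the agent with claim `a` receives `min a (α (a + b) / 2)`,
which increases with `b`. Against a smaller partner she receives at most `min a (α a)`, her payoff
against a partner with claim equal to her own. Since the top agent's claim dominates both `c i`
and `c j`, agent `i` does at least as well with her.
-/

/-- CEA payoff of the agent with claim `a` in the two-agent claims problem with
claims `a`, `b` and endowment `E` (with `0 ≤ E ≤ a + b`): both agents get `E/2`
if `E/2` does not exceed the smaller claim; otherwise the smaller-claim agent
gets her claim and the other gets the rest. -/
noncomputable def cea2 (a b E : ℝ) : ℝ :=
  if a ≤ b then min a (E / 2) else E - min b (E / 2)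

lemma cea2_of_le {a b : ℝ} (E : ℝ) (hab : a ≤ b) : cea2 a b E = min a (E / 2) :=
  if_pos hab

lemma cea2_le_min_max {a b α : ℝ} (hb : 0 ≤ b) (hα0 : 0 ≤ α) (hα1 : α ≤ 1) :
    cea2 a b (α * (a + b)) ≤ min a (α * (a + max a b) / 2) := by
  rcases le_or_gt a b with hab | hba
  · rw [cea2_of_le _ hab, max_eq_right hab]
  · rw [cea2, if_neg hba.not_ge, max_eq_left hba.le]
    rcases min_cases b (α * (a + b) / 2) with ⟨hmin, _⟩ | ⟨hmin, _⟩ <;> rw [hmin] <;>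
      refine le_min ?_ ?_ <;> nlinarith

lemma cea2_le_cea2_of_max_le {a b b' α : ℝ} (hb : 0 ≤ b) (hα0 : 0 ≤ α) (hα1 : α ≤ 1)
    (hb' : max a b ≤ b') : cea2 a b (α * (a + b)) ≤ cea2 a b' (α * (a + b')) := by
  rw [cea2_of_le _ (le_of_max_le_left hb')]
  calc cea2 a b (α * (a + b)) ≤ min a (α * (a + max a b) / 2) := cea2_le_min_max hb hα0 hα1
    _ ≤ min a (α * (a + b') / 2) := by gcongr

/-- Under CEA in a 2-minimal proportional generalized claims problem with
monotone claims, every agent `i` other than the highest-claim agent weakly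
prefers pairing with the highest-claim agent over pairing with any other agent. -/
theorem cea_pair_with_top_agent
    {n : ℕ} (c : Fin (n + 1) → ℝ) (hmono : Monotone c) (hpos : ∀ i, 0 < c i)
    (α : ℝ) (hα0 : 0 < α) (hα1 : α < 1) :
    ∀ i j : Fin (n + 1), i ≠ Fin.last n → j ≠ Fin.last n → j ≠ i →
      cea2 (c i) (c (Fin.last n)) (α * (c i + c (Fin.last n))) ≥
        cea2 (c i) (c j) (α * (c i + c j)) := by
  intro i j _ _ _
  exact cea2_le_cea2_of_max_le (hpos j).le hα0.le hα1.le
    (max_le (hmono (Fin.le_last i)) (hmono (Fin.le_last j)))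
end

section
/- Under the constrained equal awards rule in a 2-minimal proportional generalized claims problem with claims c_1 ≤ … ≤ c_n (n ≥ 3), if α ≤ 2c_1/(c_1 + c_n), then agent n weakly prefers pairing with agent n−1 over pairing with any agent i ∉ {n−1, n}: CEA_n(c_{\{n-1,n\}}, α(c_{n-1}+c_n)) ≥ CEA_n(c_{\{i,n\}}, α(c_i+c_n)). -/
lemma cea2_eq_half {a b E : ℝ} (hEb : E / 2 ≤ b) (hba : b ≤ a) : cea2 a b E = E / 2 := by
  unfold cea2
  split_ifs
  · exact min_eq_right (hEb.trans hba)
  · rw [min_eq_right hEb]; ring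

lemma mul_add_le_two_mul_of_le {α l s t : ℝ} (hα : α ≤ 2) (hl : α * (l + t) ≤ 2 * l)
    (hls : l ≤ s) : α * (s + t) ≤ 2 * s := by
  nlinarith [mul_nonneg (sub_nonneg.2 hα) (sub_nonneg.2 hls)]

section Proportional

variable {α l s s' t : ℝ}

lemma cea2_proportional_eq_half (hα : α ≤ 2) (hl : α * (l + t) ≤ 2 * l) (hls : l ≤ s)
    (hst : s ≤ t) : cea2 t s (α * (s + t)) = α * (s + t) / 2 :=
  cea2_eq_half (by linarith [mul_add_le_two_mul_of_le hα hl hls]) hst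

lemma cea2_proportional_mono (hα0 : 0 ≤ α) (hα : α ≤ 2) (hl : α * (l + t) ≤ 2 * l)
    (hls : l ≤ s) (hss' : s ≤ s') (hs't : s' ≤ t) :
    cea2 t s (α * (s + t)) ≤ cea2 t s' (α * (s' + t)) := by
  rw [cea2_proportional_eq_half hα hl hls (hss'.trans hs't),
    cea2_proportional_eq_half hα hl (hls.trans hss') hs't]
  gcongr

end Proportional

/-- If `α ≤ 2c₁/(c₁ + cₙ)`, then under CEA the highest-claim agent `n` weakly
prefers pairing with agent `n - 1` over pairing with any agent `i ∉ {n-1, n}`. -/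
theorem cea_top_prefers_second_top_when_alpha_small
    {n : ℕ} (hn : 3 ≤ n) (c : Fin n → ℝ) (hmono : Monotone c)
    (hpos : ∀ i, 0 < c i) (α : ℝ) (hα0 : 0 < α) (hα1 : α < 1)
    (hα : α ≤ 2 * c ⟨0, by omega⟩ /
        (c ⟨0, by omega⟩ + c ⟨n - 1, by omega⟩)) :
    ∀ i : Fin n, i.val < n - 2 →
      cea2 (c ⟨n - 1, by omega⟩) (c ⟨n - 2, by omega⟩)
          (α * (c ⟨n - 2, by omega⟩ + c ⟨n - 1, by omega⟩)) ≥
        cea2 (c ⟨n - 1, by omega⟩) (c i)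
          (α * (c i + c ⟨n - 1, by omega⟩)) := by
  intro i hi
  have hbottom : α * (c ⟨0, by omega⟩ + c ⟨n - 1, by omega⟩) ≤ 2 * c ⟨0, by omega⟩ :=
    (le_div_iff₀ (add_pos (hpos _) (hpos _))).1 hα
  exact cea2_proportional_mono hα0.le (by linarith) hbottom
    (hmono (Fin.le_iff_val_le_val.2 (Nat.zero_le i)))
    (hmono (Fin.mk_le_mk.2 (by omega)))
    (hmono (Fin.mk_le_mk.2 (by omega)))
end

section
/- (CEA: replacing a claim-capped agent by a lower-claim agent helps everyone.) Let S be a nonempty coalition with claims c, α ∈ (0,1), and endowments E_T = α ∑_{k∈T} c_k for coalitions T. Suppose j ∉ S receives exactly her claim under CEA in coalition S ∪ {j}: CEA_j(c_{S∪{j}}, E_{S∪{j}}) = c_j. Then for any i ∉ S ∪ {j} with c_i ≤ c_j: (a) CEA_i(c_{S∪{i}}, E_{S∪{i}}) = c_i, and (b) every k ∈ S satisfies CEA_k(c_{S∪{i}}, E_{S∪{i}}) ≥ CEA_k(c_{S∪{j}}, E_{S∪{j}}). -/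
/-!
Since `c i ≤ c j ≤ λⱼ`, evaluating the parameter `λⱼ` on the coalition `S ∪ {i}` distributes
`c i + (E_{S∪{j}} - c j)`, which is at most `E_{S∪{i}}` because `(1 - α) (c i - c j) ≤ 0`.
A CEA parameter distributing weakly more gives every claimant weakly more, so `λᵢ` beats `λⱼ`
agent by agent on `S ∪ {i}`; in particular `i` still receives her full claim.
-/

open Finset

theorem min_le_min_of_sum_min_le {ι : Type*} {s : Finset ι} {c : ι → ℝ} {μ ν : ℝ}
    (hsum : ∑ k ∈ s, min (c k) μ ≤ ∑ k ∈ s, min (c k) ν) :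
    ∀ k ∈ s, min (c k) μ ≤ min (c k) ν := by
  rcases le_or_gt μ ν with hle | hlt
  · exact fun k _ => min_le_min_left (c k) hle
  · have hmono : ∀ k ∈ s, min (c k) ν ≤ min (c k) μ := fun k _ => min_le_min_left (c k) hlt.le
    have heq := (sum_eq_sum_iff_of_le hmono).mp (le_antisymm (sum_le_sum hmono) hsum)
    exact fun k hk => (heq k hk).ge

theorem cea_swap_lower_claim_helps_general
    {N : Type*} [DecidableEq N]
    (c : N → ℝ) (α : ℝ) (hα1 : α < 1)
    (S : Finset N) (i j : N)
    (hjS : j ∉ S) (hiS : i ∉ S) (hcij : c i ≤ c j)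
    (lamj lami : ℝ)
    (hlamj : ∑ k ∈ insert j S, min (c k) lamj = α * ∑ k ∈ insert j S, c k)
    (hlami : ∑ k ∈ insert i S, min (c k) lami = α * ∑ k ∈ insert i S, c k)
    (hjfull : min (c j) lamj = c j) :
    min (c i) lami = c i ∧
      ∀ k ∈ S, min (c k) lami ≥ min (c k) lamj := by
  have hci : c i ≤ lamj := hcij.trans (min_eq_left_iff.mp hjfull)
  have hsum : ∑ k ∈ insert i S, min (c k) lamj ≤ ∑ k ∈ insert i S, min (c k) lami := by
    rw [sum_insert hjS, sum_insert hjS, hjfull] at hlamj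
    rw [hlami, sum_insert hiS, sum_insert hiS, min_eq_left hci]
    nlinarith
  have hgain := min_le_min_of_sum_min_le hsum
  refine ⟨le_antisymm (min_le_left _ _) ?_, fun k hk => hgain k (mem_insert_of_mem hk)⟩
  calc c i = min (c i) lamj := (min_eq_left hci).symm
    _ ≤ min (c i) lami := hgain i (mem_insert_self i S)

/-- CEA: replacing a claim-capped agent by a lower-claim agent helps everyone.
If `j ∉ S` receives exactly her claim under CEA in coalition `S ∪ {j}` (with
proportional coalitional endowments), then any `i ∉ S ∪ {j}` with `c i ≤ c j`
also receives her claim in `S ∪ {i}`, and every member of `S` is weakly better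
off in `S ∪ {i}` than in `S ∪ {j}`. Here `λj`, `λi` are the CEA parameters of
the respective coalitions. -/
theorem cea_swap_lower_claim_helps
    {N : Type*} [DecidableEq N]
    (c : N → ℝ) (hc : ∀ i, 0 < c i) (α : ℝ) (hα0 : 0 < α) (hα1 : α < 1)
    (S : Finset N) (hS : S.Nonempty) (i j : N)
    (hjS : j ∉ S) (hiS : i ∉ S) (hij : i ≠ j) (hcij : c i ≤ c j)
    (lamj lami : ℝ) (hlamj0 : 0 ≤ lamj) (hlami0 : 0 ≤ lami)
    (hlamj : ∑ k ∈ insert j S, min (c k) lamj = α * ∑ k ∈ insert j S, c k)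
    (hlami : ∑ k ∈ insert i S, min (c k) lami = α * ∑ k ∈ insert i S, c k)
    (hjfull : min (c j) lamj = c j) :
    min (c i) lami = c i ∧
      ∀ k ∈ S, min (c k) lami ≥ min (c k) lamj :=
  cea_swap_lower_claim_helps_general c α hα1 S i j hjS hiS hcij lamj lami hlamj hlami hjfull
end

section
/- (CEA: replacing an unconstrained agent by a higher-claim agent helps everyone.) Let S be a nonempty coalition with claims c, α ∈ (0,1), and endowments E_T = α ∑_{k∈T} c_k. Suppose i ∉ S receives strictly less than her claim under CEA in coalition S ∪ {i}: CEA_i(c_{S∪{i}}, E_{S∪{i}}) = λ_{E_{S∪{i}}} < c_i. Then for any j ∉ S ∪ {i} with c_i ≤ c_j: (a) CEA_j(c_{S∪{j}}, E_{S∪{j}}) = λ_{E_{S∪{j}}} < c_j, and (b) every k ∈ S satisfies CEA_k(c_{S∪{j}}, E_{S∪{j}}) ≥ CEA_k(c_{S∪{i}}, E_{S∪{i}}). -/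
/-!
Write `F λ = ∑_{k ∈ S} min (c k) λ`, a monotone function, and `C = ∑_{k ∈ S} c k`. The budget
equations read `λᵢ + F λᵢ = α (cᵢ + C)` and `min cⱼ λⱼ + F λⱼ = α (cⱼ + C)`. Since `λ ↦ λ + F λ` is
strictly monotone and dominates `λ ↦ min cⱼ λ + F λ`, the larger endowment forces `λᵢ ≤ λⱼ`, which
is part (b). If `j` were fully served, then `cⱼ + F λᵢ ≤ cⱼ + F λⱼ = α (cⱼ + C)`, i.e.
`(1 - α) cⱼ + α cᵢ ≤ λᵢ < cᵢ`, contradicting `cᵢ ≤ cⱼ` because `α < 1`.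
-/

open Finset

theorem monotone_sum_min {N : Type*} (c : N → ℝ) (S : Finset N) :
    Monotone fun lam => ∑ k ∈ S, min (c k) lam :=
  fun _ _ h => sum_le_sum fun k _ => min_le_min_left (c k) h

theorem le_of_add_le_min_add {F : ℝ → ℝ} (hF : Monotone F) {b x y : ℝ}
    (h : x + F x ≤ min b y + F y) : x ≤ y :=
  (strictMono_id.add_monotone hF).le_iff_le.1 <|
    h.trans (add_le_add_left (min_le_right b y) _)

theorem cea_swap_higher_claim_helps_general
    {N : Type*} [DecidableEq N]
    (c : N → ℝ) (α : ℝ) (hα0 : 0 < α) (hα1 : α < 1)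
    (S : Finset N) (i j : N)
    (hiS : i ∉ S) (hjS : j ∉ S) (hcij : c i ≤ c j)
    (lami lamj : ℝ)
    (hlami : ∑ k ∈ insert i S, min (c k) lami = α * ∑ k ∈ insert i S, c k)
    (hlamj : ∑ k ∈ insert j S, min (c k) lamj = α * ∑ k ∈ insert j S, c k)
    (hilt : lami < c i) :
    (min (c j) lamj = lamj ∧ lamj < c j) ∧
      ∀ k ∈ S, min (c k) lamj ≥ min (c k) lami := by
  rw [sum_insert hiS, sum_insert hiS, min_eq_right hilt.le] at hlami
  rw [sum_insert hjS, sum_insert hjS] at hlamj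
  have hF := monotone_sum_min c S
  have hle : lami ≤ lamj := le_of_add_le_min_add hF (b := c j) <| by
    rw [hlami, hlamj]
    gcongr
  have hlt : lamj < c j := by
    by_contra! hge
    rw [min_eq_left hge] at hlamj
    have hS_le : ∑ k ∈ S, min (c k) lami ≤ ∑ k ∈ S, min (c k) lamj := hF hle
    have hcij' := mul_le_mul_of_nonneg_left hcij (sub_nonneg.2 hα1.le)
    linarith
  exact ⟨⟨min_eq_right hlt.le, hlt⟩, fun k _ => min_le_min_left (c k) hle⟩

/-- CEA: replacing an unconstrained agent by a higher-claim agent helps everyone.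
If `i ∉ S` receives strictly less than her claim (namely the CEA parameter
`λi`) in coalition `S ∪ {i}` (with proportional coalitional endowments), then
any `j ∉ S ∪ {i}` with `c i ≤ c j` also receives strictly less than her claim
(namely `λj`) in `S ∪ {j}`, and every member of `S` is weakly better off in
`S ∪ {j}` than in `S ∪ {i}`. -/
theorem cea_swap_higher_claim_helps
    {N : Type*} [DecidableEq N]
    (c : N → ℝ) (hc : ∀ i, 0 < c i) (α : ℝ) (hα0 : 0 < α) (hα1 : α < 1)
    (S : Finset N) (hS : S.Nonempty) (i j : N)
    (hiS : i ∉ S) (hjS : j ∉ S) (hij : i ≠ j) (hcij : c i ≤ c j)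
    (lami lamj : ℝ) (hlami0 : 0 ≤ lami) (hlamj0 : 0 ≤ lamj)
    (hlami : ∑ k ∈ insert i S, min (c k) lami = α * ∑ k ∈ insert i S, c k)
    (hlamj : ∑ k ∈ insert j S, min (c k) lamj = α * ∑ k ∈ insert j S, c k)
    (hipart : min (c i) lami = lami) (hilt : lami < c i) :
    (min (c j) lamj = lamj ∧ lamj < c j) ∧
      ∀ k ∈ S, min (c k) lamj ≥ min (c k) lami :=
  cea_swap_higher_claim_helps_general c α hα0 hα1 S i j hiS hjS hcij lami lamj hlami hlamj hilt
end

section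
/- The constrained equal awards rule is consistent: if x = CEA(c, E) for a claims problem on N, then for every nonempty S ⊊ N, x restricted to S equals CEA(c|_S, ∑_{j∈S} x_j). -/
theorem Finset.forall_eq_of_sum_eq_of_monotone {ι α M : Type*} [LinearOrder α]
    [AddCommMonoid M] [PartialOrder M] [IsOrderedCancelAddMonoid M]
    {f : ι → α → M} (hf : ∀ i, Monotone (f i)) {s : Finset ι} {a b : α}
    (h : ∑ i ∈ s, f i a = ∑ i ∈ s, f i b) : ∀ i ∈ s, f i a = f i b := by
  rcases le_total a b with hab | hba
  · exact (Finset.sum_eq_sum_iff_of_le fun i _ => hf i hab).mp h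
  · exact fun i hi => ((Finset.sum_eq_sum_iff_of_le fun i _ => hf i hba).mp h.symm i hi).symm

theorem cea_consistent_general
    {N : Type*}
    (c : N → ℝ)
    (lam : ℝ)
    (S : Finset N)
    (lam' : ℝ)
    (hlam' : ∑ i ∈ S, min (c i) lam' = ∑ i ∈ S, min (c i) lam) :
    ∀ i ∈ S, min (c i) lam' = min (c i) lam :=
  Finset.forall_eq_of_sum_eq_of_monotone (fun _ => monotone_const.min monotone_id) hlam'

/-- The constrained equal awards rule is consistent: if `x = CEA(c, E)` (given
by `x i = min (c i) λ` with `∑ x = E`), then for every nonempty proper subset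
`S` of agents, the CEA allocation of the reduced problem `(c|_S, ∑_{j∈S} x j)`
(given by any valid parameter `λ'`) coincides with `x` on `S`. -/
theorem cea_consistent
    {N : Type*} [Fintype N] [DecidableEq N]
    (c : N → ℝ) (hc : ∀ i, 0 < c i) (E : ℝ) (hE0 : 0 ≤ E)
    (hE : E ≤ ∑ i, c i)
    (lam : ℝ) (hlam0 : 0 ≤ lam) (hlam : ∑ i, min (c i) lam = E)
    (S : Finset N) (hS : S.Nonempty) (hSproper : S ⊂ Finset.univ)
    (lam' : ℝ) (hlam'0 : 0 ≤ lam')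
    (hlam' : ∑ i ∈ S, min (c i) lam' = ∑ i ∈ S, min (c i) lam) :
    ∀ i ∈ S, min (c i) lam' = min (c i) lam :=
  cea_consistent_general c lam S lam' hlam'
end

section
/- The constrained equal losses rule is consistent: if x = CEL(c, E) for a claims problem on N, then for every nonempty S ⊊ N, x restricted to S equals CEL(c|_S, ∑_{j∈S} x_j). -/
/-! Each award `max 0 (c i - λ)` is antitone in `λ`, so comparing `λ'` with `λ` makes every
award on `S` move in the same direction; equal totals then force equal awards. -/

theorem Finset.apply_eq_of_sum_eq_of_antitone {ι α β : Type*} [LinearOrder α] [AddCommMonoid β]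
    [PartialOrder β] [IsOrderedCancelAddMonoid β] {s : Finset ι} {f : ι → α → β}
    (hf : ∀ i ∈ s, Antitone (f i)) {a b : α} (h : ∑ i ∈ s, f i a = ∑ i ∈ s, f i b) :
    ∀ i ∈ s, f i a = f i b := by
  rcases le_total a b with hab | hba
  · intro i hi
    exact ((Finset.sum_eq_sum_iff_of_le fun j hj => hf j hj hab).mp h.symm i hi).symm
  · exact (Finset.sum_eq_sum_iff_of_le fun j hj => hf j hj hba).mp h

theorem cel_consistent_general
    {N : Type*} (c : N → ℝ) (lam : ℝ) (S : Finset N) (lam' : ℝ)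
    (hlam' : ∑ i ∈ S, max 0 (c i - lam') = ∑ i ∈ S, max 0 (c i - lam)) :
    ∀ i ∈ S, max 0 (c i - lam') = max 0 (c i - lam) :=
  Finset.apply_eq_of_sum_eq_of_antitone
    (fun i _ _ _ h => max_le_max le_rfl (sub_le_sub_left h (c i))) hlam'

/-- The constrained equal losses rule is consistent: if `x = CEL(c, E)` (given
by `x i = max 0 (c i - λ)` with `∑ x = E`), then for every nonempty proper
subset `S` of agents, the CEL allocation of the reduced problem
`(c|_S, ∑_{j∈S} x j)` (given by any valid parameter `λ'`) coincides with `x`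
on `S`. -/
theorem cel_consistent
    {N : Type*} [Fintype N] [DecidableEq N]
    (c : N → ℝ) (hc : ∀ i, 0 < c i) (E : ℝ) (hE0 : 0 ≤ E)
    (hE : E ≤ ∑ i, c i)
    (lam : ℝ) (hlam0 : 0 ≤ lam) (hlam : ∑ i, max 0 (c i - lam) = E)
    (S : Finset N) (hS : S.Nonempty) (hSproper : S ⊂ Finset.univ)
    (lam' : ℝ) (hlam'0 : 0 ≤ lam')
    (hlam' : ∑ i ∈ S, max 0 (c i - lam') = ∑ i ∈ S, max 0 (c i - lam)) :
    ∀ i ∈ S, max 0 (c i - lam') = max 0 (c i - lam) :=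
  cel_consistent_general c lam S lam' hlam'
end

section
/- The constrained equal losses rule is resource monotonic: for a fixed claims vector c with positive entries, if 0 ≤ E ≤ E' ≤ ∑ c then CEL_i(c, E') ≥ CEL_i(c, E) for every agent i. -/
/-!
Each CEL award `max 0 (c i - λ)` is antitone in the loss level `λ`. If the loss level at
the larger endowment were strictly larger, every award would weakly drop, so the endowment
could not grow: the two endowments coincide, and awards that are pointwise comparable with
equal sums are equal.
-/

open Finset

theorem apply_le_apply_of_sum_le_sum_of_antitone {α N M : Type*} [LinearOrder α] [Fintype N]
    [AddCommMonoid M] [PartialOrder M] [IsOrderedCancelAddMonoid M] {f : α → N → M}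
    (hf : ∀ i, Antitone (f · i)) {a b : α} (hab : ∑ i, f a i ≤ ∑ i, f b i) (i : N) :
    f a i ≤ f b i := by
  rcases le_or_gt b a with hba | hab'
  · exact hf i hba
  · have hle : ∀ j ∈ univ, f b j ≤ f a j := fun j _ => hf j hab'.le
    have hsum : ∑ j, f b j = ∑ j, f a j := le_antisymm (sum_le_sum hle) hab
    exact ((sum_eq_sum_iff_of_le hle).1 hsum i (mem_univ i)).ge

theorem antitone_max_zero_sub (x : ℝ) : Antitone fun t : ℝ => max 0 (x - t) :=
  fun _ _ h => max_le_max le_rfl (sub_le_sub_left h x)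

theorem cel_resource_monotonic_general
    {N : Type*} [Fintype N]
    (c : N → ℝ) (E E' : ℝ)
    (hEE' : E ≤ E')
    (lam lam' : ℝ)
    (hlam : ∑ i, max 0 (c i - lam) = E)
    (hlam' : ∑ i, max 0 (c i - lam') = E') :
    ∀ i, max 0 (c i - lam') ≥ max 0 (c i - lam) :=
  apply_le_apply_of_sum_le_sum_of_antitone (f := fun t i => max 0 (c i - t))
    (fun i => antitone_max_zero_sub (c i)) (by rw [hlam, hlam']; exact hEE')

/-- The constrained equal losses rule is resource monotonic: for a fixed claims
vector `c` with positive entries, if `0 ≤ E ≤ E' ≤ ∑ c` then every agent's CEL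
payoff at endowment `E'` is at least her payoff at `E`. -/
theorem cel_resource_monotonic
    {N : Type*} [Fintype N]
    (c : N → ℝ) (hc : ∀ i, 0 < c i) (E E' : ℝ)
    (hE0 : 0 ≤ E) (hEE' : E ≤ E') (hE' : E' ≤ ∑ i, c i)
    (lam lam' : ℝ) (hlam0 : 0 ≤ lam) (hlam'0 : 0 ≤ lam')
    (hlam : ∑ i, max 0 (c i - lam) = E)
    (hlam' : ∑ i, max 0 (c i - lam') = E') :
    ∀ i, max 0 (c i - lam') ≥ max 0 (c i - lam) :=
  cel_resource_monotonic_general c E E' hEE' lam lam' hlam hlam'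
end

section
/- Under the constrained equal losses rule in a θ-minimal proportional generalized claims problem with claims c_1 ≤ c_2 ≤ … ≤ c_n and n > θ, the partition that groups agents consecutively by increasing claims into coalitions {1,…,θ}, {θ+1,…,2θ}, …, with one final coalition of the at most θ remaining highest-claim agents, is stable: no nonempty coalition T ⊆ N can give every member strictly more than her payoff in this partition. -/
/-!
Let `T` be a deviating coalition and `i₀` its member with the smallest claim. Since `i₀` gains,
every member of `T` is paid `c t - λ_T > 0`, so `|T| ≥ θ`, `λ_T` is the mean of `(1 - α) c` over
`T`, and the block `B` of `i₀` is a full block of `θ` consecutive agents. Members of `B` below `i₀`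
claim at most `c i₀ ≤ λ_T / (1 - α)`, while the members of `B` from `i₀` on form an initial
segment of `{j ≥ i₀} ⊇ T` of size at most `|T|`, so their mean claim is at most that of `T`.
Hence at parameter `λ_T` the CEL payoffs in `B` sum to at most the endowment of `B`, which forces
`λ_B ≤ λ_T`: `i₀` does not gain after all.
-/

open Finset

theorem card_mul_sum_le_card_mul_sum_of_forall_le {ι : Type*} [DecidableEq ι] {A T : Finset ι}
    {f : ι → ℝ}
    (hsep : ∀ a ∈ A, ∀ t ∈ T \ A, f a ≤ f t) (hcard : #A ≤ #T) :
    #T * ∑ a ∈ A, f a ≤ #A * ∑ t ∈ T, f t := by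
  rcases A.eq_empty_or_nonempty with rfl | hA
  · simp
  set x := A.sup' hA f
  have hA_le : ∑ a ∈ A, (f a - x) ≤ ∑ a ∈ A ∩ T, (f a - x) := by
    rw [← sum_inter_add_sum_sdiff A T]
    have : ∑ a ∈ A \ T, (f a - x) ≤ 0 :=
      sum_nonpos fun a ha => sub_nonpos.2 (le_sup' f (mem_sdiff.1 ha).1)
    linarith
  have hT_ge : ∑ a ∈ A ∩ T, (f a - x) ≤ ∑ t ∈ T, (f t - x) :=
    sum_le_sum_of_subset_of_nonneg inter_subset_right fun t ht htA =>
      sub_nonneg.2 <| sup'_le hA f fun a ha =>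
        hsep a ha t (mem_sdiff.2 ⟨ht, fun h => htA (mem_inter.2 ⟨h, ht⟩)⟩)
  have hA_nonpos : ∑ a ∈ A, (f a - x) ≤ 0 :=
    sum_nonpos fun a ha => sub_nonpos.2 (le_sup' f ha)
  have hshifted : (#T : ℝ) * ∑ a ∈ A, (f a - x) ≤ #A * ∑ t ∈ T, (f t - x) :=
    calc (#T : ℝ) * ∑ a ∈ A, (f a - x) ≤ #A * ∑ a ∈ A, (f a - x) :=
          mul_le_mul_of_nonpos_right (by exact_mod_cast hcard) hA_nonpos
      _ ≤ #A * ∑ t ∈ T, (f t - x) :=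
          mul_le_mul_of_nonneg_left (hA_le.trans hT_ge) (Nat.cast_nonneg _)
  simp only [sum_sub_distrib, sum_const, nsmul_eq_mul] at hshifted
  linarith

section ConstrainedEqualLosses

variable {ι : Type*} {s : Finset ι} {c : ι → ℝ}

theorem sum_max_sub_lt_sum_max_sub {a b : ℝ} (hab : a < b) (hs : ∃ j ∈ s, a < c j) :
    ∑ i ∈ s, max 0 (c i - b) < ∑ i ∈ s, max 0 (c i - a) := by
  refine sum_lt_sum (fun i _ => max_le_max le_rfl (by linarith)) ?_
  obtain ⟨j, hj, haj⟩ := hs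
  exact ⟨j, hj, max_lt (by simpa using haj) (by linarith) |>.trans_le (le_max_right _ _)⟩

theorem le_of_sum_max_sub_le {a b : ℝ} (hs : ∃ j ∈ s, a < c j)
    (h : ∑ i ∈ s, max 0 (c i - a) ≤ ∑ i ∈ s, max 0 (c i - b)) : b ≤ a :=
  le_of_not_gt fun hab => (sum_max_sub_lt_sum_max_sub hab hs).not_ge h

theorem le_card_of_sum_max_sub_eq_ite {θ : ℕ} {a E : ℝ} {i : ι} (hi : i ∈ s) (hai : a < c i)
    (h : ∑ j ∈ s, max 0 (c j - a) = if θ ≤ #s then E else 0) : θ ≤ #s := by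
  by_contra hθ
  rw [if_neg hθ, sum_eq_zero_iff_of_nonneg fun j _ => le_max_left _ _] at h
  have := h i hi
  rw [max_eq_right (by linarith)] at this
  linarith

variable [LinearOrder ι] {α l : ℝ} {T B : Finset ι} {i₀ : ι}

theorem sum_max_sub_le_of_ordConnected (hmono : Monotone c) (hc : ∀ i, 0 ≤ c i)
    (hα0 : 0 ≤ α) (hα1 : α ≤ 1) (hT : ∑ t ∈ T, max 0 (c t - l) = α * ∑ t ∈ T, c t)
    (hl : l < c i₀) (hi₀T : ∀ t ∈ T, i₀ ≤ t) (hi₀B : i₀ ∈ B)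
    (hB : (B : Set ι).OrdConnected) (hcard : #B ≤ #T) :
    ∑ j ∈ B, max 0 (c j - l) ≤ α * ∑ j ∈ B, c j := by
  have hTl : #T * l = (1 - α) * ∑ t ∈ T, c t := by
    rw [sum_congr rfl fun t ht =>
        max_eq_right (sub_nonneg.2 (hl.trans_le (hmono (hi₀T t ht))).le),
      sum_sub_distrib, sum_const, nsmul_eq_mul] at hT
    linarith
  have hTpos : (0 : ℝ) < #T := by exact_mod_cast (card_pos.2 ⟨i₀, hi₀B⟩).trans_le hcard
  have hl_ge : (1 - α) * c i₀ ≤ l := by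
    have := card_nsmul_le_sum T c (c i₀) fun t ht => hmono (hi₀T t ht)
    rw [nsmul_eq_mul] at this
    nlinarith
  set A := B.filter (i₀ ≤ ·)
  have hbelow : ∀ j ∈ B.filter (¬ i₀ ≤ ·), max 0 (c j - l) ≤ α * c j := by
    intro j hj
    have hcj : c j ≤ c i₀ := hmono (le_of_not_ge (mem_filter.1 hj).2)
    exact max_le (mul_nonneg hα0 (hc j)) (by nlinarith)
  have hsep : ∀ a ∈ A, ∀ t ∈ T \ A, c a ≤ c t := by
    intro a ha t ht
    obtain ⟨htT, htA⟩ := mem_sdiff.1 ht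
    refine hmono (le_of_not_gt fun hta => htA (mem_filter.2 ⟨?_, hi₀T t htT⟩))
    exact hB.out hi₀B (mem_filter.1 ha).1 ⟨hi₀T t htT, hta.le⟩
  have havg := card_mul_sum_le_card_mul_sum_of_forall_le hsep ((card_filter_le _ _).trans hcard)
  have habove : ∑ j ∈ A, max 0 (c j - l) ≤ α * ∑ j ∈ A, c j := by
    rw [sum_congr rfl fun j hj =>
        max_eq_right (sub_nonneg.2 (hl.trans_le (hmono (mem_filter.1 hj).2)).le),
      sum_sub_distrib, sum_const, nsmul_eq_mul]
    have hscaled : #T * ((1 - α) * ∑ j ∈ A, c j) ≤ #T * (#A * l) :=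
      calc #T * ((1 - α) * ∑ j ∈ A, c j) = (1 - α) * (#T * ∑ j ∈ A, c j) := by ring
        _ ≤ (1 - α) * (#A * ∑ t ∈ T, c t) := mul_le_mul_of_nonneg_left havg (by linarith)
        _ = #T * (#A * l) := by linear_combination (-(#A : ℝ)) * hTl
    linarith [le_of_mul_le_mul_left hscaled hTpos]
  have hbelow_sum := sum_le_sum hbelow
  rw [← mul_sum] at hbelow_sum
  rw [← sum_filter_add_sum_filter_not B (i₀ ≤ ·),
    ← sum_filter_add_sum_filter_not B (i₀ ≤ ·) c]
  linarith

theorem le_of_sum_max_sub_eq_of_ordConnected {m : ℝ} (hmono : Monotone c) (hc : ∀ i, 0 ≤ c i)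
    (hα0 : 0 ≤ α) (hα1 : α ≤ 1) (hT : ∑ t ∈ T, max 0 (c t - l) = α * ∑ t ∈ T, c t)
    (hB' : ∑ j ∈ B, max 0 (c j - m) = α * ∑ j ∈ B, c j)
    (hl : l < c i₀) (hi₀T : ∀ t ∈ T, i₀ ≤ t) (hi₀B : i₀ ∈ B)
    (hB : (B : Set ι).OrdConnected) (hcard : #B ≤ #T) : m ≤ l :=
  le_of_sum_max_sub_le ⟨i₀, hi₀B, hl⟩ <| hB' ▸
    sum_max_sub_le_of_ordConnected hmono hc hα0 hα1 hT hl hi₀T hi₀B hB hcard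

end ConstrainedEqualLosses

section Blocks

variable {n θ : ℕ}

theorem Fin.ordConnected_filter_div_eq (k : ℕ) :
    (↑(univ.filter fun j : Fin n => j.val / θ = k) : Set (Fin n)).OrdConnected := by
  refine ⟨fun x hx y hy z hz => ?_⟩
  simp only [coe_filter, mem_univ, true_and, Set.mem_ofPred_eq] at hx hy ⊢
  exact le_antisymm (hy ▸ Nat.div_le_div_right hz.2) (hx ▸ Nat.div_le_div_right hz.1)

theorem Fin.card_filter_div_eq (hθ : 0 < θ) {k : ℕ} (hk : k * θ + θ ≤ n) :
    #(univ.filter fun j : Fin n => j.val / θ = k) = θ := by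
  have : (univ.filter fun j : Fin n => j.val / θ = k) =
      (Ico (k * θ) (k * θ + θ)).attachFin fun m hm => (mem_Ico.1 hm).2.trans_le hk := by
    ext j
    simp only [mem_filter, mem_univ, true_and, mem_attachFin, mem_Ico, Nat.div_eq_iff hθ]
    omega
  rw [this, card_attachFin, Nat.card_Ico, Nat.add_sub_cancel_left]

theorem Fin.val_add_card_le {T : Finset (Fin n)} {i : Fin n} (hT : ∀ t ∈ T, i ≤ t) :
    i.val + #T ≤ n := by
  have := card_le_card fun t ht => mem_Ici.2 (hT t ht)
  rw [Fin.card_Ici] at this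
  omega

end Blocks

theorem cel_algorithm_partition_stable_general
    {θ n : ℕ} (hθ : 0 < θ)
    (c : Fin n → ℝ) (hmono : Monotone c) (hpos : ∀ i, 0 < c i)
    (α : ℝ) (hα0 : 0 < α) (hα1 : α < 1)
    (lam : Finset (Fin n) → ℝ)
    (hlam : ∀ S : Finset (Fin n), S.Nonempty → 0 ≤ lam S ∧
      ∑ i ∈ S, max 0 (c i - lam S) =
        (if θ ≤ S.card then α * ∑ i ∈ S, c i else 0)) :
    ¬ ∃ T : Finset (Fin n), T.Nonempty ∧ ∀ i ∈ T,
        max 0 (c i - lam T) >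
          max 0 (c i -
            lam (Finset.univ.filter
              (fun j : Fin n => j.val / θ = i.val / θ))) := by
  rintro ⟨T, hT, hgain⟩
  set i₀ := T.min' hT
  have hi₀T : ∀ t ∈ T, i₀ ≤ t := fun t ht => T.min'_le t ht
  set B := univ.filter fun j : Fin n => j.val / θ = i₀.val / θ
  have hgain₀ := hgain i₀ (T.min'_mem hT)
  have hl : lam T < c i₀ := sub_pos.1 <|
    (lt_max_iff.1 ((le_max_left _ _).trans_lt hgain₀)).resolve_left (lt_irrefl 0)
  obtain ⟨-, hTsum⟩ := hlam T hT
  have hθT := le_card_of_sum_max_sub_eq_ite (T.min'_mem hT) hl hTsum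
  have hBcard : #B = θ := Fin.card_filter_div_eq hθ <| by
    have := Fin.val_add_card_le hi₀T
    have := Nat.div_mul_le_self i₀.val θ
    omega
  obtain ⟨-, hBsum⟩ := hlam B ⟨i₀, by simp [B]⟩
  rw [if_pos hθT] at hTsum
  rw [if_pos hBcard.ge] at hBsum
  have hBT := le_of_sum_max_sub_eq_of_ordConnected hmono (fun i => (hpos i).le) hα0.le hα1.le
    hTsum hBsum hl hi₀T (by simp [B]) (Fin.ordConnected_filter_div_eq _) (hBcard.trans_le hθT)
  exact hgain₀.not_ge (max_le_max le_rfl (by linarith))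

/-- Under the constrained equal losses rule in a θ-minimal proportional
generalized claims problem with monotone claims and `n > θ` agents, the
partition grouping agents consecutively by increasing claims into blocks of
size `θ` (with one final block of the at most `θ` remaining highest-claim
agents), i.e. agent `i`'s coalition is `{j | j / θ = i / θ}`, is stable.
Here `lam S` is the CEL parameter of coalition `S`: payoffs
`max 0 (c i - lam S)` sum to the coalitional endowment, which is
`α ∑_{i∈S} c i` if `|S| ≥ θ` and `0` otherwise. -/
theorem cel_algorithm_partition_stable
    {θ n : ℕ} (hθ : 0 < θ) (hn : θ < n)
    (c : Fin n → ℝ) (hmono : Monotone c) (hpos : ∀ i, 0 < c i)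
    (α : ℝ) (hα0 : 0 < α) (hα1 : α < 1)
    (lam : Finset (Fin n) → ℝ)
    (hlam : ∀ S : Finset (Fin n), S.Nonempty → 0 ≤ lam S ∧
      ∑ i ∈ S, max 0 (c i - lam S) =
        (if θ ≤ S.card then α * ∑ i ∈ S, c i else 0)) :
    ¬ ∃ T : Finset (Fin n), T.Nonempty ∧ ∀ i ∈ T,
        max 0 (c i - lam T) >
          max 0 (c i -
            lam (Finset.univ.filter
              (fun j : Fin n => j.val / θ = i.val / θ))) :=
  cel_algorithm_partition_stable_general hθ c hmono hpos α hα0 hα1 lam hlam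
end
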